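/- arXiv:1703.06767 — 3 statements merged into one kernel-verified Lean document; each statement's English description precedes it below -/
import Mathlib

section
/- Let T > 0, p > 0, ρ > 0, C⋆ > 0, and let 0 < η < p with η ≤ 2; set γ⋆ := η/(2p + η(ρ−2)) (the denominator is positive). Suppose that for every h ∈ (0,1] there are jointly measurable processes v₁ʰ, v₂ʰ on [0,T] with almost surely continuous paths, eʰ := v₁ʰ − v₂ʰ, and a random time τ_h : Ω → [0,T] such that {τ_h < T} ⊆ {sup_{t∈[0,T]}|v₁ʰ(t)| ≥ h^{−γ⋆}} ∪ {sup_{t∈[0,T]}|v₂ʰ(t)| ≥ h^{−γ⋆}}, E[sup_{t∈[0,T]}|vᵢʰ(t)|^p] ≤ C⋆ for i = 1,2, and E[sup_{t∈[0,τ_h]}|eʰ(t)|²] ≤ h^{1−ργ⋆}. Then there is a constant C, depending only on p, η, ρ and C⋆, such that (E[sup_{t∈[0,T]}|eʰ(t)|^η])^{1/η} ≤ C·h^{(1/2)·(p−η)/(p−η+ηρ/2)} for all h ∈ (0,1]. -/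
/-!
On `{τ = T}` the uniform error is the stopped error, whose `η`-th moment is at most the
`η/2`-th power of its second moment by Jensen (`η ≤ 2`). On `{τ < T}` one of the paths reaches
the level `L = h^(-γ⋆)`, so with `S = max (sup |v₁|) (sup |v₂|) ≥ L` we trade the `p - η` missing
moments for powers of `1/L`: `|e|^η ≤ 2^η S^η ≤ 2^η L^(η-p) S^p`. The exponent `γ⋆` is chosen so
that both contributions are `h^(γ⋆(p-η))`.
-/

open MeasureTheory Set
open scoped ENNReal

lemma bddAbove_range_abs_of_continuousOn {a b : ℝ} {f : ℝ → ℝ} (hf : ContinuousOn f (Icc a b)) :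
    BddAbove (range fun t : Icc a b => |f t|) :=
  (isCompact_Icc.bddAbove_image hf.abs).mono (by rintro _ ⟨t, rfl⟩; exact ⟨t, t.2, rfl⟩)

lemma iSup_Icc_eq_iSup_rat {a b : ℝ} (hab : a ≤ b) {f : ℝ → ℝ} (hf : ContinuousOn f (Icc a b)) :
    ⨆ t : Icc a b, f t = ⨆ q : ℚ, f (projIcc a b hab q) := by
  have hdense : DenseRange fun q : ℚ => projIcc a b hab q :=
    (projIcc_surjective hab).denseRange.comp Rat.denseRange_cast continuous_projIcc
  exact ((iSup_range' _ _).symm.trans (hdense.ciSup' hf.domRestrict)).symm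

lemma aemeasurable_iSup_abs_Icc {Ω : Type*} [MeasurableSpace Ω] {μ : Measure Ω} {T : ℝ}
    {w : ℝ → Ω → ℝ} (hw : Measurable (Function.uncurry w))
    (hcont : ∀ᵐ ω ∂μ, ContinuousOn (fun t => w t ω) (Icc 0 T))
    {σ : Ω → ℝ} (hσ : Measurable σ) (hσT : ∀ ω, σ ω ∈ Icc 0 T) :
    AEMeasurable (fun ω => ⨆ t : Icc (0:ℝ) (σ ω), |w t ω|) μ := by
  refine ⟨fun ω => ⨆ q : ℚ, |w (max 0 (min (σ ω) q)) ω|, ?_, ?_⟩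
  · refine Measurable.iSup fun q => ?_
    exact (hw.comp ((measurable_const.max (hσ.min measurable_const)).prodMk measurable_id)).abs
  · filter_upwards [hcont] with ω hω
    have := iSup_Icc_eq_iSup_rat (hσT ω).1
      ((hω.mono (Icc_subset_Icc le_rfl (hσT ω).2)).abs)
    simpa only [projIcc] using this

lemma lintegral_rpow_le_rpow_lintegral {Ω : Type*} [MeasurableSpace Ω] {μ : Measure Ω}
    [IsProbabilityMeasure μ] {f : Ω → ℝ≥0∞} (hf : AEMeasurable f μ) {s : ℝ} (hs : 0 < s)
    (hs1 : s ≤ 1) : ∫⁻ ω, f ω ^ s ∂μ ≤ (∫⁻ ω, f ω ∂μ) ^ s := by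
  have h := eLpNorm'_le_eLpNorm'_of_exponent_le hs hs1 μ hf.aestronglyMeasurable
  simp only [eLpNorm', enorm_eq_self, ENNReal.rpow_one, div_one, one_div] at h
  exact (ENNReal.rpow_inv_le_iff hs).1 h

lemma rpow_le_rpow_sub_mul_rpow {L x η p : ℝ} (hL : 0 < L) (hLx : L ≤ x) (hηp : η ≤ p) :
    x ^ η ≤ L ^ (η - p) * x ^ p := by
  have hx : 0 < x := hL.trans_le hLx
  calc x ^ η = x ^ (η - p) * x ^ p := by rw [← Real.rpow_add hx, sub_add_cancel]
    _ ≤ L ^ (η - p) * x ^ p := mul_le_mul_of_nonneg_right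
      (Real.rpow_le_rpow_of_nonpos hL hLx (sub_nonpos.2 hηp)) (Real.rpow_nonneg hx.le p)

lemma max_rpow_le_rpow_add_rpow {a b p : ℝ} (ha : 0 ≤ a) (hb : 0 ≤ b) :
    max a b ^ p ≤ a ^ p + b ^ p := by
  rcases max_choice a b with h | h <;> rw [h]
  · exact le_add_of_nonneg_right (Real.rpow_nonneg hb p)
  · exact le_add_of_nonneg_left (Real.rpow_nonneg ha p)

lemma iSup_abs_sub_le_add {T : ℝ} (hT : 0 ≤ T) {f g : ℝ → ℝ} (hf : ContinuousOn f (Icc 0 T))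
    (hg : ContinuousOn g (Icc 0 T)) :
    ⨆ t : Icc (0:ℝ) T, |f t - g t| ≤ (⨆ t : Icc (0:ℝ) T, |f t|) + ⨆ t : Icc (0:ℝ) T, |g t| :=
  have : Nonempty (Icc (0:ℝ) T) := ⟨⟨0, le_rfl, hT⟩⟩
  ciSup_le fun t => (abs_sub _ _).trans <| add_le_add
    (le_ciSup (bddAbove_range_abs_of_continuousOn hf) t)
    (le_ciSup (bddAbove_range_abs_of_continuousOn hg) t)

lemma iSup_abs_sub_rpow_le {T σ L η p : ℝ} {f g : ℝ → ℝ} (hf : ContinuousOn f (Icc 0 T))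
    (hg : ContinuousOn g (Icc 0 T)) (hσ : σ ∈ Icc 0 T) (hL : 0 < L)
    (hstop : σ < T → L ≤ (⨆ t : Icc (0:ℝ) T, |f t|) ∨ L ≤ ⨆ t : Icc (0:ℝ) T, |g t|)
    (hη : 0 ≤ η) (hηp : η ≤ p) :
    (⨆ t : Icc (0:ℝ) T, |f t - g t|) ^ η ≤ (⨆ t : Icc (0:ℝ) σ, |f t - g t|) ^ η
      + 2 ^ η * L ^ (η - p)
        * ((⨆ t : Icc (0:ℝ) T, |f t|) ^ p + (⨆ t : Icc (0:ℝ) T, |g t|) ^ p) := by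
  set Sf := ⨆ t : Icc (0:ℝ) T, |f t|
  set Sg := ⨆ t : Icc (0:ℝ) T, |g t|
  have hSf : 0 ≤ Sf := Real.iSup_nonneg fun _ => abs_nonneg _
  have hSg : 0 ≤ Sg := Real.iSup_nonneg fun _ => abs_nonneg _
  rcases hσ.2.lt_or_eq with hσT | rfl
  · have hLM : L ≤ max Sf Sg := (hstop hσT).elim le_max_of_le_left le_max_of_le_right
    have hE := iSup_abs_sub_le_add (hσ.1.trans hσT.le) hf hg
    have hE0 : 0 ≤ ⨆ t : Icc (0:ℝ) T, |f t - g t| := Real.iSup_nonneg fun _ => abs_nonneg _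
    calc (⨆ t : Icc (0:ℝ) T, |f t - g t|) ^ η ≤ (2 * max Sf Sg) ^ η := by
          gcongr
          linarith [le_max_left Sf Sg, le_max_right Sf Sg]
      _ = 2 ^ η * max Sf Sg ^ η := Real.mul_rpow zero_le_two (hSf.trans (le_max_left _ _))
      _ ≤ 2 ^ η * (L ^ (η - p) * (Sf ^ p + Sg ^ p)) := by
          gcongr
          refine (rpow_le_rpow_sub_mul_rpow hL hLM hηp).trans ?_
          gcongr
          exact max_rpow_le_rpow_add_rpow hSf hSg
      _ ≤ _ := by
          rw [← mul_assoc]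
          exact le_add_of_nonneg_left (Real.rpow_nonneg (Real.iSup_nonneg fun _ => abs_nonneg _) _)
  · exact le_add_of_nonneg_right (by positivity)

lemma lintegral_ofReal_rpow_le_rpow {Ω : Type*} [MeasurableSpace Ω] {μ : Measure Ω}
    [IsProbabilityMeasure μ] {g : Ω → ℝ} (hg : AEMeasurable g μ) (hg0 : ∀ ω, 0 ≤ g ω) {r q : ℝ}
    (hr : 0 < r) (hrq : r ≤ q) :
    ∫⁻ ω, ENNReal.ofReal (g ω ^ r) ∂μ ≤ (∫⁻ ω, ENNReal.ofReal (g ω ^ q) ∂μ) ^ (r / q) := by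
  have hq : 0 < q := hr.trans_le hrq
  have hpow : ∀ ω, ENNReal.ofReal (g ω ^ q) ^ (r / q) = ENNReal.ofReal (g ω ^ r) := fun ω => by
    rw [ENNReal.ofReal_rpow_of_nonneg (Real.rpow_nonneg (hg0 ω) q) (by positivity),
      ← Real.rpow_mul (hg0 ω), mul_div_cancel₀ r hq.ne']
  simpa only [hpow] using lintegral_rpow_le_rpow_lintegral (hg.pow_const q).ennreal_ofReal
    (div_pos hr hq) ((div_le_one hq).2 hrq)

section StoppedError

variable {Ω : Type*} [MeasurableSpace Ω] {μ : Measure Ω} {T L η p : ℝ} {v₁ v₂ : ℝ → Ω → ℝ}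
  {τ : Ω → ℝ}

lemma lintegral_iSup_abs_sub_rpow_le_add (hT : 0 ≤ T) (hm₁ : Measurable (Function.uncurry v₁))
    (hm₂ : Measurable (Function.uncurry v₂))
    (hc₁ : ∀ᵐ ω ∂μ, ContinuousOn (fun t => v₁ t ω) (Icc 0 T))
    (hc₂ : ∀ᵐ ω ∂μ, ContinuousOn (fun t => v₂ t ω) (Icc 0 T))
    (hτT : ∀ ω, τ ω ∈ Icc 0 T) (hL : 0 < L)
    (hstop : {ω | τ ω < T} ⊆ {ω | L ≤ ⨆ t : Icc (0:ℝ) T, |v₁ t.1 ω|}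
      ∪ {ω | L ≤ ⨆ t : Icc (0:ℝ) T, |v₂ t.1 ω|})
    (hη : 0 ≤ η) (hηp : η ≤ p) :
    ∫⁻ ω, ENNReal.ofReal ((⨆ t : Icc (0:ℝ) T, |v₁ t.1 ω - v₂ t.1 ω|) ^ η) ∂μ
      ≤ ∫⁻ ω, ENNReal.ofReal ((⨆ t : Icc (0:ℝ) (τ ω), |v₁ t.1 ω - v₂ t.1 ω|) ^ η) ∂μ
        + ENNReal.ofReal (2 ^ η * L ^ (η - p))
          * (∫⁻ ω, ENNReal.ofReal ((⨆ t : Icc (0:ℝ) T, |v₁ t.1 ω|) ^ p) ∂μ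
            + ∫⁻ ω, ENNReal.ofReal ((⨆ t : Icc (0:ℝ) T, |v₂ t.1 ω|) ^ p) ∂μ) := by
  have hS₁ := ((aemeasurable_iSup_abs_Icc hm₁ hc₁ measurable_const
    fun _ => ⟨hT, le_rfl⟩).pow_const p).ennreal_ofReal
  have hS₂ := ((aemeasurable_iSup_abs_Icc hm₂ hc₂ measurable_const
    fun _ => ⟨hT, le_rfl⟩).pow_const p).ennreal_ofReal
  rw [← lintegral_add_left' hS₁, ← lintegral_const_mul' _ _ ENNReal.ofReal_ne_top,
    ← lintegral_add_right' _ (by exact (hS₁.add hS₂).const_mul _)]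
  refine lintegral_mono_ae ?_
  filter_upwards [hc₁, hc₂] with ω h₁ h₂
  have hS₀ : ∀ w : ℝ → Ω → ℝ, 0 ≤ (⨆ t : Icc (0:ℝ) T, |w t.1 ω|) ^ p :=
    fun _ => Real.rpow_nonneg (Real.iSup_nonneg fun _ => abs_nonneg _) p
  have hc : 0 ≤ 2 ^ η * L ^ (η - p) := by have := hL.le; positivity
  rw [← ENNReal.ofReal_add (hS₀ v₁) (hS₀ v₂), ← ENNReal.ofReal_mul hc,
    ← ENNReal.ofReal_add (Real.rpow_nonneg (Real.iSup_nonneg fun _ => abs_nonneg _) _)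
      (mul_nonneg hc (add_nonneg (hS₀ v₁) (hS₀ v₂)))]
  exact ENNReal.ofReal_le_ofReal (iSup_abs_sub_rpow_le h₁ h₂ (hτT ω) hL (fun h => hstop h) hη hηp)

theorem lintegral_iSup_abs_sub_rpow_le [IsProbabilityMeasure μ] {B Cs : ℝ} (hT : 0 ≤ T)
    (hm₁ : Measurable (Function.uncurry v₁)) (hm₂ : Measurable (Function.uncurry v₂))
    (hc₁ : ∀ᵐ ω ∂μ, ContinuousOn (fun t => v₁ t ω) (Icc 0 T))
    (hc₂ : ∀ᵐ ω ∂μ, ContinuousOn (fun t => v₂ t ω) (Icc 0 T))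
    (hτ : Measurable τ) (hτT : ∀ ω, τ ω ∈ Icc 0 T) (hL : 0 < L)
    (hstop : {ω | τ ω < T} ⊆ {ω | L ≤ ⨆ t : Icc (0:ℝ) T, |v₁ t.1 ω|}
      ∪ {ω | L ≤ ⨆ t : Icc (0:ℝ) T, |v₂ t.1 ω|})
    (hη : 0 < η) (hηp : η ≤ p) (hη2 : η ≤ 2) (hB : 0 ≤ B) (hCs : 0 ≤ Cs)
    (hI₁ : ∫⁻ ω, ENNReal.ofReal ((⨆ t : Icc (0:ℝ) T, |v₁ t.1 ω|) ^ p) ∂μ ≤ ENNReal.ofReal Cs)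
    (hI₂ : ∫⁻ ω, ENNReal.ofReal ((⨆ t : Icc (0:ℝ) T, |v₂ t.1 ω|) ^ p) ∂μ ≤ ENNReal.ofReal Cs)
    (hIe : ∫⁻ ω, ENNReal.ofReal ((⨆ t : Icc (0:ℝ) (τ ω), |v₁ t.1 ω - v₂ t.1 ω|) ^ 2) ∂μ
      ≤ ENNReal.ofReal B) :
    ∫⁻ ω, ENNReal.ofReal ((⨆ t : Icc (0:ℝ) T, |v₁ t.1 ω - v₂ t.1 ω|) ^ η) ∂μ
      ≤ ENNReal.ofReal (B ^ (η / 2) + 2 ^ (η + 1) * L ^ (η - p) * Cs) := by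
  have hY := aemeasurable_iSup_abs_Icc (hm₁.sub hm₂)
    (by filter_upwards [hc₁, hc₂] with ω h₁ h₂ using h₁.sub h₂) hτ hτT
  have hlocal := lintegral_ofReal_rpow_le_rpow hY (fun _ => Real.iSup_nonneg fun _ => abs_nonneg _)
    hη hη2
  simp only [Real.rpow_two] at hlocal
  have hc : 0 ≤ 2 ^ η * L ^ (η - p) := by have := hL.le; positivity
  calc _ ≤ _ := lintegral_iSup_abs_sub_rpow_le_add hT hm₁ hm₂ hc₁ hc₂ hτT hL hstop hη.le hηp
    _ ≤ ENNReal.ofReal B ^ (η / 2) + ENNReal.ofReal (2 ^ η * L ^ (η - p))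
          * (ENNReal.ofReal Cs + ENNReal.ofReal Cs) := by
      gcongr
      exact hlocal.trans (ENNReal.rpow_le_rpow hIe (by positivity))
    _ = _ := by
      rw [ENNReal.ofReal_rpow_of_nonneg hB (by positivity), ← ENNReal.ofReal_add hCs hCs,
        ← ENNReal.ofReal_mul hc, ← ENNReal.ofReal_add (by positivity) (by positivity),
        Real.rpow_add_one two_ne_zero]
      ring_nf

end StoppedError

theorem enkf_rate_corollary_general
    {Ω : Type*} [MeasurableSpace Ω] (μ : Measure Ω) [IsProbabilityMeasure μ]
    (p η ρ Cs : ℝ) (hρ : 0 < ρ) (hCs : 0 < Cs)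
    (hη0 : 0 < η) (hηp : η < p) (hη2 : η ≤ 2) :
    ∃ C > 0, ∀ T : ℝ, 0 < T →
      ∀ h ∈ Ioc (0:ℝ) 1, ∀ (v₁ v₂ : ℝ → Ω → ℝ) (τ : Ω → ℝ),
      Measurable (Function.uncurry v₁) → Measurable (Function.uncurry v₂) →
      (∀ᵐ ω ∂μ, ContinuousOn (fun t => v₁ t ω) (Icc 0 T)) →
      (∀ᵐ ω ∂μ, ContinuousOn (fun t => v₂ t ω) (Icc 0 T)) →
      Measurable τ → (∀ ω, τ ω ∈ Icc (0:ℝ) T) →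
      ({ω | τ ω < T} ⊆
        {ω | h ^ (-(η / (2 * p + η * (ρ - 2)))) ≤ ⨆ t : Icc (0:ℝ) T, |v₁ t.1 ω|}
          ∪ {ω | h ^ (-(η / (2 * p + η * (ρ - 2)))) ≤ ⨆ t : Icc (0:ℝ) T, |v₂ t.1 ω|}) →
      (∫⁻ ω, ENNReal.ofReal ((⨆ t : Icc (0:ℝ) T, |v₁ t.1 ω|) ^ p) ∂μ ≤ ENNReal.ofReal Cs) →
      (∫⁻ ω, ENNReal.ofReal ((⨆ t : Icc (0:ℝ) T, |v₂ t.1 ω|) ^ p) ∂μ ≤ ENNReal.ofReal Cs) →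
      (∫⁻ ω, ENNReal.ofReal ((⨆ t : Icc (0:ℝ) (τ ω), |v₁ t.1 ω - v₂ t.1 ω|) ^ 2) ∂μ
          ≤ ENNReal.ofReal (h ^ (1 - ρ * (η / (2 * p + η * (ρ - 2)))))) →
      (∫⁻ ω, ENNReal.ofReal ((⨆ t : Icc (0:ℝ) T, |v₁ t.1 ω - v₂ t.1 ω|) ^ η) ∂μ) ^ (1/η)
        ≤ ENNReal.ofReal (C * h ^ ((1/2) * (p - η) / (p - η + η * ρ / 2))) := by
  have hD : 0 < 2 * p + η * (ρ - 2) := by nlinarith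
  set γ := η / (2 * p + η * (ρ - 2))
  set K : ℝ := 1 + 2 ^ (η + 1) * Cs
  have hK : 0 < K := by positivity
  refine ⟨K ^ (1 / η), by positivity, ?_⟩
  intro T hT h hh v₁ v₂ τ hm₁ hm₂ hc₁ hc₂ hτ hτT hstop hI₁ hI₂ hIe
  have h0 : 0 < h := hh.1
  have hγ₁ : (1 - ρ * γ) * (η / 2) = γ * (p - η) := by simp only [γ]; field_simp; ring
  have hγ₂ : -γ * (η - p) = γ * (p - η) := by ring
  have hγ₃ : γ * (p - η) * (1 / η) = (1/2) * (p - η) / (p - η + η * ρ / 2) := by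
    have hden : 0 < p - η + η * ρ / 2 := by nlinarith
    rw [show γ * (p - η) * (1 / η) = (p - η) / (2 * p + η * (ρ - 2)) by simp only [γ]; field_simp,
      div_eq_div_iff hD.ne' hden.ne']
    ring
  have hbound := lintegral_iSup_abs_sub_rpow_le hT.le hm₁ hm₂ hc₁ hc₂ hτ hτT
    (Real.rpow_pos_of_pos h0 _) hstop hη0 hηp.le hη2 (Real.rpow_nonneg h0.le _) hCs.le hI₁ hI₂ hIe
  rw [← Real.rpow_mul h0.le, ← Real.rpow_mul h0.le, hγ₁, hγ₂] at hbound
  calc _ ≤ ENNReal.ofReal (K * h ^ (γ * (p - η))) ^ (1 / η) := by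
        gcongr
        convert hbound using 2
        ring
    _ = _ := by
      rw [ENNReal.ofReal_rpow_of_nonneg (by positivity) (by positivity),
        Real.mul_rpow hK.le (by positivity), ← Real.rpow_mul h0.le, hγ₃]

/-- Corollary `cor:rate`: with the optimal stopping level `γ⋆ = η/(2p + η(ρ-2))` and localized
error bound `h^(1-ργ⋆)`, the uniform strong error in `L^η` is of order
`h^((1/2)·(p-η)/(p-η+ηρ/2))`, with a constant depending only on `p`, `η`, `ρ` and `C⋆`. -/
theorem enkf_rate_corollary
    {Ω : Type*} [MeasurableSpace Ω] (μ : Measure Ω) [IsProbabilityMeasure μ]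
    (p η ρ Cs : ℝ) (hp : 0 < p) (hρ : 0 < ρ) (hCs : 0 < Cs)
    (hη0 : 0 < η) (hηp : η < p) (hη2 : η ≤ 2) :
    ∃ C > 0, ∀ T : ℝ, 0 < T →
      ∀ h ∈ Ioc (0:ℝ) 1, ∀ (v₁ v₂ : ℝ → Ω → ℝ) (τ : Ω → ℝ),
      Measurable (Function.uncurry v₁) → Measurable (Function.uncurry v₂) →
      (∀ᵐ ω ∂μ, ContinuousOn (fun t => v₁ t ω) (Icc 0 T)) →
      (∀ᵐ ω ∂μ, ContinuousOn (fun t => v₂ t ω) (Icc 0 T)) →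
      Measurable τ → (∀ ω, τ ω ∈ Icc (0:ℝ) T) →
      ({ω | τ ω < T} ⊆
        {ω | h ^ (-(η / (2 * p + η * (ρ - 2)))) ≤ ⨆ t : Icc (0:ℝ) T, |v₁ t.1 ω|}
          ∪ {ω | h ^ (-(η / (2 * p + η * (ρ - 2)))) ≤ ⨆ t : Icc (0:ℝ) T, |v₂ t.1 ω|}) →
      (∫⁻ ω, ENNReal.ofReal ((⨆ t : Icc (0:ℝ) T, |v₁ t.1 ω|) ^ p) ∂μ ≤ ENNReal.ofReal Cs) →
      (∫⁻ ω, ENNReal.ofReal ((⨆ t : Icc (0:ℝ) T, |v₂ t.1 ω|) ^ p) ∂μ ≤ ENNReal.ofReal Cs) →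
      (∫⁻ ω, ENNReal.ofReal ((⨆ t : Icc (0:ℝ) (τ ω), |v₁ t.1 ω - v₂ t.1 ω|) ^ 2) ∂μ
          ≤ ENNReal.ofReal (h ^ (1 - ρ * (η / (2 * p + η * (ρ - 2)))))) →
      (∫⁻ ω, ENNReal.ofReal ((⨆ t : Icc (0:ℝ) T, |v₁ t.1 ω - v₂ t.1 ω|) ^ η) ∂μ) ^ (1/η)
        ≤ ENNReal.ofReal (C * h ^ ((1/2) * (p - η) / (p - η + η * ρ / 2))) :=
  enkf_rate_corollary_general μ p η ρ Cs hρ hCs hη0 hηp hη2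
end

section
/- Let T > 0, h ∈ (0,1], γ > 0, δ > 0, C⋆ > 0, p > 0, s > p and 0 < q < s. Let v₁, v₂ be jointly measurable processes on [0,T] with almost surely continuous paths, e := v₁ − v₂, and τ : Ω → [0,T] a random time with {τ < T} ⊆ {sup_{t∈[0,T]}|v₁(t)| ≥ h^{−γ}} ∪ {sup_{t∈[0,T]}|v₂(t)| ≥ h^{−γ}}. Assume E[sup_{t∈[0,T]}|vᵢ(t)|^p] ≤ C⋆ and sup_{t∈[0,T]} E[|vᵢ(t)|^s] ≤ C⋆ for i = 1,2, and E[sup_{t∈[0,τ]}|e(t)|²] ≤ h^{2δ}. Then there is a constant C, depending only on p, q, s and C⋆, such that sup_{t∈[0,T]} E[|e(t)|^q] ≤ C·(h^{(δ − γp/2)·q} + h^{γp·(s−q)/s}). -/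
/-!
Split `E|e(t)|^q` over the event `A = {|e(t)| > K}` with `K = h^(δ - γp/2)`. Off `A` the integrand
is at most `K^q`. On `A`, Hölder with exponents `s/q` and `s/(s-q)` gives
`E[|e(t)|^s]^(q/s) μ(A)^((s-q)/s)`, where `E|e(t)|^s ≤ 2^(s+1) C⋆`. Finally `μ(A)` is at most
`μ(A ∩ {τ = T}) ≤ h^(2δ)/K² = h^(γp)` (Chebyshev for the supremum of `|e|` up to `τ`, which
dominates `|e(t)|` when `τ = T`) plus `μ(τ < T) ≤ 2 C⋆ h^(γp)` (Markov for the `p`-th moments of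
the running suprema at level `h^(-γ)`).
-/

open MeasureTheory Set

open scoped ENNReal

section

variable {Ω : Type*} [MeasurableSpace Ω] {μ : Measure Ω}

lemma aemeasurable_iSup_of_continuous {ι : Type*} [TopologicalSpace ι]
    [TopologicalSpace.SeparableSpace ι] {X : ι → Ω → ℝ} (hX : ∀ i, Measurable (X i))
    (hcont : ∀ᵐ ω ∂μ, Continuous fun i => X i ω) :
    AEMeasurable (fun ω => ⨆ i, X i ω) μ := by
  obtain ⟨D, hDc, hD⟩ := TopologicalSpace.exists_countable_dense ι
  have := hDc.to_subtype
  refine (Measurable.iSup fun i : D => hX i).aemeasurable.congr ?_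
  filter_upwards [hcont] with ω hω
  exact hD.ciSup' hω

lemma IsCompact.le_ciSup_of_continuousOn {X : Type*} [TopologicalSpace X] {K : Set X}
    (hK : IsCompact K) {g : X → ℝ} (hg : ContinuousOn g K) {x : X} (hx : x ∈ K) :
    g x ≤ ⨆ y : K, g y :=
  le_ciSup (f := fun y : K => g y)
    (by simpa only [image_eq_range] using hK.bddAbove_image hg) ⟨x, hx⟩

lemma meas_ge_le_ofReal_div_rpow {X : Ω → ℝ} (hX : AEMeasurable X μ) {c p M : ℝ}
    (hc : 0 < c) (hp : 0 < p) (hM : ∫⁻ ω, ENNReal.ofReal (X ω ^ p) ∂μ ≤ ENNReal.ofReal M) :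
    μ {ω | c ≤ X ω} ≤ ENNReal.ofReal (M / c ^ p) := by
  have hcp : 0 < c ^ p := Real.rpow_pos_of_pos hc p
  calc μ {ω | c ≤ X ω}
      ≤ μ {ω | ENNReal.ofReal (c ^ p) ≤ ENNReal.ofReal (X ω ^ p)} :=
        measure_mono fun ω hω => ENNReal.ofReal_le_ofReal (Real.rpow_le_rpow hc.le hω hp.le)
    _ ≤ (∫⁻ ω, ENNReal.ofReal (X ω ^ p) ∂μ) / ENNReal.ofReal (c ^ p) :=
        meas_ge_le_lintegral_div (hX.pow_const p).ennreal_ofReal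
          (ENNReal.ofReal_pos.2 hcp).ne' ENNReal.ofReal_ne_top
    _ ≤ ENNReal.ofReal M / ENNReal.ofReal (c ^ p) := by gcongr
    _ = ENNReal.ofReal (M / c ^ p) := (ENNReal.ofReal_div_of_pos hcp).symm

lemma meas_ge_iSup_abs_le {v : ℝ → Ω → ℝ} (hv : ∀ t, Measurable (v t)) {T c p M : ℝ}
    (hcont : ∀ᵐ ω ∂μ, ContinuousOn (fun t => v t ω) (Icc 0 T)) (hc : 0 < c) (hp : 0 < p)
    (hM : ∫⁻ ω, ENNReal.ofReal ((⨆ t : Icc (0:ℝ) T, |v t.1 ω|) ^ p) ∂μ ≤ ENNReal.ofReal M) :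
    μ {ω | c ≤ ⨆ t : Icc (0:ℝ) T, |v t.1 ω|} ≤ ENNReal.ofReal (M / c ^ p) :=
  meas_ge_le_ofReal_div_rpow (aemeasurable_iSup_of_continuous
    (X := fun (t : Icc (0:ℝ) T) ω => |v t ω|) (fun t => (hv t).abs)
    (hcont.mono fun _ hω => hω.domRestrict.abs)) hc hp hM

lemma lintegral_abs_sub_rpow_le {f g : Ω → ℝ} (hf : AEMeasurable f μ) {s M : ℝ} (hs : 0 ≤ s)
    (hM : 0 ≤ M) (hfM : ∫⁻ ω, ENNReal.ofReal (|f ω| ^ s) ∂μ ≤ ENNReal.ofReal M)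
    (hgM : ∫⁻ ω, ENNReal.ofReal (|g ω| ^ s) ∂μ ≤ ENNReal.ofReal M) :
    ∫⁻ ω, ENNReal.ofReal (|f ω - g ω| ^ s) ∂μ ≤ ENNReal.ofReal (2 ^ (s + 1) * M) := by
  have hpow (x : ℝ) : ENNReal.ofReal (|x| ^ s) = ENNReal.ofReal |x| ^ s :=
    (ENNReal.ofReal_rpow_of_nonneg (abs_nonneg x) hs).symm
  have hpt (ω : Ω) : ENNReal.ofReal (|f ω - g ω| ^ s)
      ≤ 2 ^ s * (ENNReal.ofReal (|f ω| ^ s) + ENNReal.ofReal (|g ω| ^ s)) := by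
    simp only [hpow]
    calc ENNReal.ofReal |f ω - g ω| ^ s
        ≤ (ENNReal.ofReal |f ω| + ENNReal.ofReal |g ω|) ^ s := by
          gcongr
          exact (ENNReal.ofReal_le_ofReal (abs_sub _ _)).trans ENNReal.ofReal_add_le
      _ ≤ _ := ENNReal.add_rpow_le_two_rpow_mul_rpow_add_rpow _ _ hs
  calc ∫⁻ ω, ENNReal.ofReal (|f ω - g ω| ^ s) ∂μ
      ≤ ∫⁻ ω, 2 ^ s * (ENNReal.ofReal (|f ω| ^ s) + ENNReal.ofReal (|g ω| ^ s)) ∂μ :=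
        lintegral_mono hpt
    _ = 2 ^ s * (∫⁻ ω, ENNReal.ofReal (|f ω| ^ s) ∂μ
          + ∫⁻ ω, ENNReal.ofReal (|g ω| ^ s) ∂μ) := by
        rw [lintegral_const_mul' _ _ (by finiteness),
          lintegral_add_left' (hf.abs.pow_const s).ennreal_ofReal]
    _ ≤ 2 ^ s * (ENNReal.ofReal M + ENNReal.ofReal M) := by gcongr
    _ = ENNReal.ofReal (2 ^ (s + 1) * M) := by
        rw [← ENNReal.ofReal_add hM hM, ← ENNReal.ofReal_ofNat 2,
          ENNReal.ofReal_rpow_of_pos two_pos, ← ENNReal.ofReal_mul (by positivity),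
          Real.rpow_add_one two_ne_zero]
        ring_nf

lemma lintegral_rpow_le_lintegral_rpow_mul_measure_univ {f : Ω → ℝ≥0∞} (hf : AEMeasurable f μ)
    {q s : ℝ} (hq : 0 < q) (hqs : q < s) :
    ∫⁻ ω, f ω ^ q ∂μ ≤ (∫⁻ ω, f ω ^ s ∂μ) ^ (q / s) * μ univ ^ ((s - q) / s) := by
  have hs : 0 < s := hq.trans hqs
  have hconj : (s / q).HolderConjugate (s / (s - q)) := by
    refine Real.holderConjugate_iff.mpr ⟨(one_lt_div hq).2 hqs, ?_⟩
    rw [inv_div, inv_div]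
    field_simp
    ring
  have hHolder := ENNReal.lintegral_mul_le_Lp_mul_Lq μ hconj (hf.pow_const q) aemeasurable_const
    (g := 1)
  simp only [Pi.mul_apply, Pi.one_apply, mul_one, ENNReal.one_rpow, lintegral_one,
    one_div_div] at hHolder
  simpa only [← ENNReal.rpow_mul, mul_div_cancel₀ s hq.ne'] using hHolder

lemma lintegral_abs_rpow_le_of_tail [IsProbabilityMeasure μ] {f : Ω → ℝ} (hf : Measurable f)
    {q s K M P : ℝ} (hq : 0 < q) (hqs : q < s) (hK : 0 ≤ K) (hM : 0 ≤ M) (hP : 0 ≤ P)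
    (hmom : ∫⁻ ω, ENNReal.ofReal (|f ω| ^ s) ∂μ ≤ ENNReal.ofReal M)
    (htail : μ {ω | K < |f ω|} ≤ ENNReal.ofReal P) :
    ∫⁻ ω, ENNReal.ofReal (|f ω| ^ q) ∂μ
      ≤ ENNReal.ofReal (K ^ q + M ^ (q / s) * P ^ ((s - q) / s)) := by
  set A := {ω | K < |f ω|}
  have hA : MeasurableSet A := measurableSet_lt measurable_const hf.abs
  have hpow (r : ℝ) (hr : 0 ≤ r) (ω : Ω) :
      ENNReal.ofReal (|f ω| ^ r) = ENNReal.ofReal |f ω| ^ r :=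
    (ENNReal.ofReal_rpow_of_nonneg (abs_nonneg _) hr).symm
  have hs : 0 ≤ s := hq.le.trans hqs.le
  have hexp : 0 ≤ (s - q) / s := div_nonneg (sub_nonneg.2 hqs.le) hs
  have hbelow : ∫⁻ ω in Aᶜ, ENNReal.ofReal (|f ω| ^ q) ∂μ ≤ ENNReal.ofReal (K ^ q) := calc
    _ ≤ ∫⁻ _ in Aᶜ, ENNReal.ofReal (K ^ q) ∂μ := setLIntegral_mono' hA.compl fun ω hω =>
        ENNReal.ofReal_le_ofReal (Real.rpow_le_rpow (abs_nonneg _) (not_lt.1 hω) hq.le)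
    _ = ENNReal.ofReal (K ^ q) * μ Aᶜ := setLIntegral_const _ _
    _ ≤ ENNReal.ofReal (K ^ q) := mul_le_of_le_one_right' prob_le_one
  have habove : ∫⁻ ω in A, ENNReal.ofReal (|f ω| ^ q) ∂μ
      ≤ ENNReal.ofReal (M ^ (q / s) * P ^ ((s - q) / s)) := calc
    _ = ∫⁻ ω in A, ENNReal.ofReal |f ω| ^ q ∂μ := by simp only [hpow q hq.le]
    _ ≤ (∫⁻ ω in A, ENNReal.ofReal |f ω| ^ s ∂μ) ^ (q / s)
          * μ.restrict A univ ^ ((s - q) / s) :=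
        lintegral_rpow_le_lintegral_rpow_mul_measure_univ
          hf.abs.ennreal_ofReal.aemeasurable hq hqs
    _ ≤ ENNReal.ofReal M ^ (q / s) * ENNReal.ofReal P ^ ((s - q) / s) := by
        rw [Measure.restrict_apply_univ]
        gcongr
        simp only [← hpow s hs]
        exact (setLIntegral_le_lintegral _ _).trans hmom
    _ = ENNReal.ofReal (M ^ (q / s) * P ^ ((s - q) / s)) := by
        rw [ENNReal.ofReal_rpow_of_nonneg hM (by positivity),
          ENNReal.ofReal_rpow_of_nonneg hP hexp,
          ENNReal.ofReal_mul (by positivity)]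
  calc ∫⁻ ω, ENNReal.ofReal (|f ω| ^ q) ∂μ
      = ∫⁻ ω in A, ENNReal.ofReal (|f ω| ^ q) ∂μ + ∫⁻ ω in Aᶜ, ENNReal.ofReal (|f ω| ^ q) ∂μ :=
        (lintegral_add_compl _ hA).symm
    _ ≤ ENNReal.ofReal (M ^ (q / s) * P ^ ((s - q) / s)) + ENNReal.ofReal (K ^ q) :=
        add_le_add habove hbelow
    _ = _ := by rw [add_comm, ENNReal.ofReal_add (by positivity) (by positivity)]

lemma meas_lt_abs_le_of_stopped {e : ℝ → Ω → ℝ} {τ : Ω → ℝ} {T t K H : ℝ}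
    (he : Measurable (e t)) (hcont : ∀ᵐ ω ∂μ, ContinuousOn (fun r => e r ω) (Icc 0 T))
    (hτ : Measurable τ) (hτT : ∀ ω, τ ω ≤ T) (ht : t ∈ Icc 0 T) (hK : 0 < K)
    (hH : ∫⁻ ω, ENNReal.ofReal ((⨆ r : Icc (0:ℝ) (τ ω), |e r.1 ω|) ^ 2) ∂μ ≤ ENNReal.ofReal H) :
    μ {ω | K < |e t ω|} ≤ ENNReal.ofReal (H / K ^ 2) + μ {ω | τ ω < T} := by
  set S := {ω | K < |e t ω|} ∩ {ω | T ≤ τ ω}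
  have hS : MeasurableSet S :=
    (measurableSet_lt measurable_const he.abs).inter (measurableSet_le measurable_const hτ)
  have hK2 : 0 < K ^ 2 := by positivity
  have hle : ∀ᵐ ω ∂μ, ω ∈ S → ENNReal.ofReal (K ^ 2)
      ≤ ENNReal.ofReal ((⨆ r : Icc (0:ℝ) (τ ω), |e r.1 ω|) ^ 2) := by
    filter_upwards [hcont] with ω hω ⟨hKe, hTτ⟩
    rw [le_antisymm (hτT ω) hTτ]
    exact ENNReal.ofReal_le_ofReal (pow_le_pow_left₀ hK.le
      (hKe.le.trans (isCompact_Icc.le_ciSup_of_continuousOn hω.abs ht)) 2)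
  have hSle : μ S ≤ ENNReal.ofReal (H / K ^ 2) := by
    rw [ENNReal.ofReal_div_of_pos hK2, ENNReal.le_div_iff_mul_le
      (Or.inl (ENNReal.ofReal_pos.2 hK2).ne') (Or.inl ENNReal.ofReal_ne_top), mul_comm]
    calc ENNReal.ofReal (K ^ 2) * μ S = ∫⁻ _ in S, ENNReal.ofReal (K ^ 2) ∂μ :=
          (setLIntegral_const _ _).symm
      _ ≤ ∫⁻ ω in S, ENNReal.ofReal ((⨆ r : Icc (0:ℝ) (τ ω), |e r.1 ω|) ^ 2) ∂μ :=
          setLIntegral_mono_ae' hS hle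
      _ ≤ _ := (setLIntegral_le_lintegral _ _).trans hH
  refine (measure_mono fun ω hω => ?_).trans ((measure_union_le S _).trans (by gcongr))
  exact (le_or_gt T (τ ω)).imp (fun hTτ => ⟨hω, hTτ⟩) id

end

theorem enkf_rate_weak_lemma_general
    {Ω : Type*} [MeasurableSpace Ω] (μ : Measure Ω) [IsProbabilityMeasure μ]
    (p q s Cs : ℝ) (hp : 0 < p) (hq0 : 0 < q) (hqs : q < s) (hCs : 0 < Cs) :
    ∃ C > 0, ∀ T γ δ : ℝ, 0 < T → 0 < γ → 0 < δ →
      ∀ h ∈ Ioc (0:ℝ) 1, ∀ (v₁ v₂ : ℝ → Ω → ℝ) (τ : Ω → ℝ),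
      Measurable (Function.uncurry v₁) → Measurable (Function.uncurry v₂) →
      (∀ᵐ ω ∂μ, ContinuousOn (fun t => v₁ t ω) (Icc 0 T)) →
      (∀ᵐ ω ∂μ, ContinuousOn (fun t => v₂ t ω) (Icc 0 T)) →
      Measurable τ → (∀ ω, τ ω ∈ Icc (0:ℝ) T) →
      ({ω | τ ω < T} ⊆
        {ω | h ^ (-γ) ≤ ⨆ t : Icc (0:ℝ) T, |v₁ t.1 ω|}
          ∪ {ω | h ^ (-γ) ≤ ⨆ t : Icc (0:ℝ) T, |v₂ t.1 ω|}) →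
      (∫⁻ ω, ENNReal.ofReal ((⨆ t : Icc (0:ℝ) T, |v₁ t.1 ω|) ^ p) ∂μ ≤ ENNReal.ofReal Cs) →
      (∫⁻ ω, ENNReal.ofReal ((⨆ t : Icc (0:ℝ) T, |v₂ t.1 ω|) ^ p) ∂μ ≤ ENNReal.ofReal Cs) →
      ((⨆ t : Icc (0:ℝ) T, ∫⁻ ω, ENNReal.ofReal (|v₁ t.1 ω| ^ s) ∂μ) ≤ ENNReal.ofReal Cs) →
      ((⨆ t : Icc (0:ℝ) T, ∫⁻ ω, ENNReal.ofReal (|v₂ t.1 ω| ^ s) ∂μ) ≤ ENNReal.ofReal Cs) →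
      (∫⁻ ω, ENNReal.ofReal ((⨆ t : Icc (0:ℝ) (τ ω), |v₁ t.1 ω - v₂ t.1 ω|) ^ 2) ∂μ
          ≤ ENNReal.ofReal (h ^ (2 * δ))) →
      (⨆ t : Icc (0:ℝ) T, ∫⁻ ω, ENNReal.ofReal (|v₁ t.1 ω - v₂ t.1 ω| ^ q) ∂μ)
        ≤ ENNReal.ofReal (C * (h ^ ((δ - γ * p / 2) * q) + h ^ (γ * p * (s - q) / s))) := by
  set B := (2 ^ (s + 1) * Cs) ^ (q / s) * (1 + 2 * Cs) ^ ((s - q) / s)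
  refine ⟨1 + B, by positivity, ?_⟩
  rintro T γ δ - - - h ⟨h0, -⟩ v₁ v₂ τ hv₁ hv₂ hc₁ hc₂ hτ hτT hτsub hm₁ hm₂ hs₁ hs₂ herr
  have hlevel_pos : 0 < h ^ (-γ) := Real.rpow_pos_of_pos h0 _
  have hlevel : Cs / (h ^ (-γ)) ^ p = Cs * h ^ (γ * p) := by
    rw [← Real.rpow_mul h0.le, neg_mul, Real.rpow_neg h0.le, div_inv_eq_mul]
  have hstop : μ {ω | τ ω < T} ≤ ENNReal.ofReal (2 * Cs * h ^ (γ * p)) := calc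
    _ ≤ _ := (measure_mono hτsub).trans (measure_union_le _ _)
    _ ≤ _ := add_le_add
        (meas_ge_iSup_abs_le (fun _ => hv₁.of_uncurry_left) hc₁ hlevel_pos hp hm₁)
        (meas_ge_iSup_abs_le (fun _ => hv₂.of_uncurry_left) hc₂ hlevel_pos hp hm₂)
    _ = _ := by rw [hlevel, ← ENNReal.ofReal_add (by positivity) (by positivity)]; ring_nf
  refine iSup_le fun t => ?_
  set K := h ^ (δ - γ * p / 2)
  have hK2 : h ^ (2 * δ) / K ^ 2 = h ^ (γ * p) := by
    rw [← Real.rpow_natCast, ← Real.rpow_mul h0.le, ← Real.rpow_sub h0]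
    ring_nf
  have htail : μ {ω | K < |v₁ t ω - v₂ t ω|} ≤ ENNReal.ofReal ((1 + 2 * Cs) * h ^ (γ * p)) := by
    refine (meas_lt_abs_le_of_stopped (e := v₁ - v₂) (K := K)
      (hv₁.of_uncurry_left.sub hv₂.of_uncurry_left) (hc₁.and hc₂ |>.mono fun ω hω => hω.1.sub hω.2)
      hτ (fun ω => (hτT ω).2) t.2 (Real.rpow_pos_of_pos h0 _) herr).trans
      ((add_le_add_right hstop _).trans_eq ?_)
    rw [hK2, ← ENNReal.ofReal_add (by positivity) (by positivity)]
    ring_nf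
  have hmom := lintegral_abs_sub_rpow_le hv₁.of_uncurry_left.aemeasurable (hq0.trans hqs).le
    hCs.le ((le_iSup _ t).trans hs₁) ((le_iSup _ t).trans hs₂)
  refine (lintegral_abs_rpow_le_of_tail (hv₁.of_uncurry_left.sub hv₂.of_uncurry_left) hq0 hqs
    (Real.rpow_nonneg h0.le _) (by positivity) (by positivity) hmom htail).trans
    (ENNReal.ofReal_le_ofReal ?_)
  rw [Real.mul_rpow (x := 1 + 2 * Cs) (by positivity) (by positivity), ← Real.rpow_mul h0.le,
    ← Real.rpow_mul h0.le, ← mul_div_assoc]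
  have : 0 ≤ B * h ^ ((δ - γ * p / 2) * q) := by positivity
  nlinarith [Real.rpow_nonneg h0.le (γ * p * (s - q) / s)]

/-- Lemma `lem:rate_weak`: under uniform-in-time `p`-th moment bounds of the running suprema,
pointwise-in-time `s`-th moment bounds, and localized squared error bound `h^(2δ)` up to a random
time `τ` whose failure event is controlled by exceedance of the level `h^(-γ)`, the pointwise
`q`-th moment of the error satisfies
`sup_{t∈[0,T]} E|e(t)|^q ≤ C·(h^((δ-γp/2)q) + h^(γp(s-q)/s))`,
with `C` depending only on `p`, `q`, `s`, `C⋆`. -/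
theorem enkf_rate_weak_lemma
    {Ω : Type*} [MeasurableSpace Ω] (μ : Measure Ω) [IsProbabilityMeasure μ]
    (p q s Cs : ℝ) (hp : 0 < p) (hps : p < s) (hq0 : 0 < q) (hqs : q < s) (hCs : 0 < Cs) :
    ∃ C > 0, ∀ T γ δ : ℝ, 0 < T → 0 < γ → 0 < δ →
      ∀ h ∈ Ioc (0:ℝ) 1, ∀ (v₁ v₂ : ℝ → Ω → ℝ) (τ : Ω → ℝ),
      Measurable (Function.uncurry v₁) → Measurable (Function.uncurry v₂) →
      (∀ᵐ ω ∂μ, ContinuousOn (fun t => v₁ t ω) (Icc 0 T)) →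
      (∀ᵐ ω ∂μ, ContinuousOn (fun t => v₂ t ω) (Icc 0 T)) →
      Measurable τ → (∀ ω, τ ω ∈ Icc (0:ℝ) T) →
      ({ω | τ ω < T} ⊆
        {ω | h ^ (-γ) ≤ ⨆ t : Icc (0:ℝ) T, |v₁ t.1 ω|}
          ∪ {ω | h ^ (-γ) ≤ ⨆ t : Icc (0:ℝ) T, |v₂ t.1 ω|}) →
      (∫⁻ ω, ENNReal.ofReal ((⨆ t : Icc (0:ℝ) T, |v₁ t.1 ω|) ^ p) ∂μ ≤ ENNReal.ofReal Cs) →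
      (∫⁻ ω, ENNReal.ofReal ((⨆ t : Icc (0:ℝ) T, |v₂ t.1 ω|) ^ p) ∂μ ≤ ENNReal.ofReal Cs) →
      ((⨆ t : Icc (0:ℝ) T, ∫⁻ ω, ENNReal.ofReal (|v₁ t.1 ω| ^ s) ∂μ) ≤ ENNReal.ofReal Cs) →
      ((⨆ t : Icc (0:ℝ) T, ∫⁻ ω, ENNReal.ofReal (|v₂ t.1 ω| ^ s) ∂μ) ≤ ENNReal.ofReal Cs) →
      (∫⁻ ω, ENNReal.ofReal ((⨆ t : Icc (0:ℝ) (τ ω), |v₁ t.1 ω - v₂ t.1 ω|) ^ 2) ∂μ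
          ≤ ENNReal.ofReal (h ^ (2 * δ))) →
      (⨆ t : Icc (0:ℝ) T, ∫⁻ ω, ENNReal.ofReal (|v₁ t.1 ω - v₂ t.1 ω| ^ q) ∂μ)
        ≤ ENNReal.ofReal (C * (h ^ ((δ - γ * p / 2) * q) + h ^ (γ * p * (s - q) / s))) :=
  enkf_rate_weak_lemma_general μ p q s Cs hp hq0 hqs hCs
end

section
/- Let h > 0 and 0 ≤ s ≤ h. Let X be a square-integrable real random variable and let ζ be a real random variable with Gaussian law N(0, s) that is independent of X. Define the interpolated one-step value Y := X + s·f_h(X) + ζ·σ_h(X). Then E[Y²] = E[X²] − s·E[ X⁴/(1+h·X²)² ] + s·(s − 2h)·E[ X⁶/(1+h·X²)² ]; in particular, since s ≤ 2h, E[Y²] ≤ E[X²] − s·E[ X⁴/(1+h·X²)² ] ≤ E[X²]. -/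
/-!
Since `ζ` is centred and independent of `X`, the cross term drops out and
`E[Y²] = E[(X + s f_h(X))²] + s E[σ_h(X)²]`. The tamed coefficients satisfy the exact identity
`x f_h(x) = -(σ_h(x)² + h f_h(x)²)`, which turns this into
`E[X²] - s E[σ_h(X)²] + s (s - 2h) E[f_h(X)²]`; the last term is nonpositive as `s ≤ 2h`.
-/

open MeasureTheory ProbabilityTheory

section IndependentNoise

variable {Ω : Type*} [MeasurableSpace Ω] {μ : Measure Ω} [IsFiniteMeasure μ]

theorem integral_add_mul_sq_of_indepFun {A G ζ : Ω → ℝ} (hA : MemLp A 2 μ) (hG : MemLp G 2 μ)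
    (hζ : MemLp ζ 2 μ) (hind : IndepFun ζ (fun ω => (A ω, G ω)) μ) (hmean : μ[ζ] = 0) :
    ∫ ω, (A ω + ζ ω * G ω) ^ 2 ∂μ = ∫ ω, A ω ^ 2 ∂μ + Var[ζ; μ] * ∫ ω, G ω ^ 2 ∂μ := by
  have hcross : IndepFun ζ (fun ω => 2 * A ω * G ω) μ :=
    hind.comp measurable_id (by fun_prop : Measurable fun p : ℝ × ℝ => 2 * p.1 * p.2)
  have hnoise : IndepFun (fun ω => ζ ω ^ 2) (fun ω => G ω ^ 2) μ :=
    hind.comp (by fun_prop : Measurable fun x : ℝ => x ^ 2)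
      (by fun_prop : Measurable fun p : ℝ × ℝ => p.2 ^ 2)
  have hAG : Integrable (fun ω => 2 * A ω * G ω) μ := by
    simpa only [mul_assoc, Pi.mul_apply] using (hA.integrable_mul hG).const_mul 2
  have hζAG : Integrable (fun ω => ζ ω * (2 * A ω * G ω)) μ :=
    hcross.integrable_mul (hζ.integrable one_le_two) hAG
  have hζG : Integrable (fun ω => ζ ω ^ 2 * G ω ^ 2) μ :=
    hnoise.integrable_mul hζ.integrable_sq hG.integrable_sq
  have hexpand : (fun ω => (A ω + ζ ω * G ω) ^ 2)
      = fun ω => A ω ^ 2 + ζ ω * (2 * A ω * G ω) + ζ ω ^ 2 * G ω ^ 2 := by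
    funext ω; ring
  have hAζAG : Integrable (fun ω => A ω ^ 2 + ζ ω * (2 * A ω * G ω)) μ :=
    hA.integrable_sq.add hζAG
  rw [hexpand, integral_add hAζAG hζG, integral_add hA.integrable_sq hζAG,
    hcross.integral_fun_mul_eq_mul_integral hζ.aestronglyMeasurable hAG.aestronglyMeasurable,
    hnoise.integral_fun_mul_eq_mul_integral hζ.integrable_sq.aestronglyMeasurable
      hG.integrable_sq.aestronglyMeasurable,
    variance_of_integral_eq_zero hζ.aestronglyMeasurable.aemeasurable hmean, hmean, zero_mul,
    add_zero]

end IndependentNoise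

section Tamed

noncomputable def tamedDrift (h x : ℝ) : ℝ := -x ^ 3 / (1 + h * x ^ 2)

noncomputable def tamedDiffusion (h x : ℝ) : ℝ := x ^ 2 / (1 + h * x ^ 2)

theorem tamedDrift_sq (h x : ℝ) : tamedDrift h x ^ 2 = x ^ 6 / (1 + h * x ^ 2) ^ 2 := by
  rw [tamedDrift, div_pow]; ring

theorem tamedDiffusion_sq (h x : ℝ) : tamedDiffusion h x ^ 2 = x ^ 4 / (1 + h * x ^ 2) ^ 2 := by
  rw [tamedDiffusion, div_pow]; ring

variable {h : ℝ}

theorem one_add_mul_sq_pos (hh : 0 ≤ h) (x : ℝ) : 0 < 1 + h * x ^ 2 := by positivity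

theorem mul_tamedDrift (hh : 0 ≤ h) (x : ℝ) :
    x * tamedDrift h x = -(tamedDiffusion h x ^ 2 + h * tamedDrift h x ^ 2) := by
  have := (one_add_mul_sq_pos hh x).ne'
  rw [tamedDrift_sq, tamedDiffusion_sq, tamedDrift]
  field_simp

theorem measurable_tamedDrift : Measurable (tamedDrift h) := by
  unfold tamedDrift; fun_prop

theorem measurable_tamedDiffusion : Measurable (tamedDiffusion h) := by
  unfold tamedDiffusion; fun_prop

theorem abs_tamedDrift_le (hh : 0 < h) (x : ℝ) : |tamedDrift h x| ≤ h⁻¹ * |x| := by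
  have hd := one_add_mul_sq_pos hh.le x
  rw [tamedDrift, abs_div, abs_neg, abs_of_pos hd, div_le_iff₀ hd, abs_pow]
  have hx : 0 ≤ |x| := abs_nonneg x
  rw [← sq_abs x]
  field_simp
  nlinarith [pow_nonneg hx 3]

theorem abs_tamedDiffusion_le (hh : 0 < h) (x : ℝ) : |tamedDiffusion h x| ≤ h⁻¹ := by
  have hd := one_add_mul_sq_pos hh.le x
  rw [tamedDiffusion, abs_of_nonneg (by positivity), div_le_iff₀ hd]
  field_simp
  nlinarith [sq_nonneg x]

theorem sq_add_mul_tamedDrift_add_mul_sq_tamedDiffusion (hh : 0 ≤ h) (s x : ℝ) :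
    (x + s * tamedDrift h x) ^ 2 + s * tamedDiffusion h x ^ 2
      = x ^ 2 - s * tamedDiffusion h x ^ 2 + s * (s - 2 * h) * tamedDrift h x ^ 2 := by
  linear_combination 2 * s * mul_tamedDrift hh x

end Tamed

section TamedStep

variable {Ω : Type*} [MeasurableSpace Ω] {μ : Measure Ω} {h : ℝ} {X : Ω → ℝ}

theorem memLp_tamedDrift_comp {p : ENNReal} (hh : 0 < h) (hX : MemLp X p μ) :
    MemLp (fun ω => tamedDrift h (X ω)) p μ :=
  hX.of_le_mul (measurable_tamedDrift.comp_aemeasurable hX.aestronglyMeasurable.aemeasurable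
    |>.aestronglyMeasurable) (ae_of_all _ fun ω => abs_tamedDrift_le hh (X ω))

theorem memLp_tamedDiffusion_comp [IsFiniteMeasure μ] {p : ENNReal} (hh : 0 < h)
    (hX : AEMeasurable X μ) : MemLp (fun ω => tamedDiffusion h (X ω)) p μ :=
  .of_bound (measurable_tamedDiffusion.comp_aemeasurable hX).aestronglyMeasurable h⁻¹
    (ae_of_all _ fun ω => abs_tamedDiffusion_le hh (X ω))

theorem integral_sq_tamedEulerStep [IsFiniteMeasure μ] {s : ℝ} {ζ : Ω → ℝ} (hh : 0 < h)
    (hX : MemLp X 2 μ) (hζ : MemLp ζ 2 μ) (hind : IndepFun ζ X μ) (hmean : μ[ζ] = 0)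
    (hvar : Var[ζ; μ] = s) :
    ∫ ω, (X ω + s * tamedDrift h (X ω) + ζ ω * tamedDiffusion h (X ω)) ^ 2 ∂μ
      = ∫ ω, X ω ^ 2 ∂μ - s * ∫ ω, tamedDiffusion h (X ω) ^ 2 ∂μ
        + s * (s - 2 * h) * ∫ ω, tamedDrift h (X ω) ^ 2 ∂μ := by
  have hf := memLp_tamedDrift_comp hh hX
  have hσ : MemLp (fun ω => tamedDiffusion h (X ω)) 2 μ :=
    memLp_tamedDiffusion_comp hh hX.aestronglyMeasurable.aemeasurable
  have hA : MemLp (fun ω => X ω + s * tamedDrift h (X ω)) 2 μ := hX.add (hf.const_mul s)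
  have hindAG : IndepFun ζ (fun ω => (X ω + s * tamedDrift h (X ω), tamedDiffusion h (X ω))) μ :=
    hind.comp measurable_id
      ((measurable_id.add (measurable_tamedDrift.const_mul s)).prodMk measurable_tamedDiffusion)
  have hσ2 := hσ.integrable_sq.const_mul s
  have hXσ : Integrable (fun ω => X ω ^ 2 - s * tamedDiffusion h (X ω) ^ 2) μ :=
    hX.integrable_sq.sub hσ2
  rw [integral_add_mul_sq_of_indepFun hA hσ hζ hindAG hmean, hvar, ← integral_const_mul,
    ← integral_const_mul, ← integral_add hA.integrable_sq hσ2,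
    ← integral_sub hX.integrable_sq hσ2,
    ← integral_add hXσ (hf.integrable_sq.const_mul _)]
  exact integral_congr_ae (ae_of_all _ fun ω =>
    sq_add_mul_tamedDrift_add_mul_sq_tamedDiffusion hh.le s (X ω))

end TamedStep

theorem enkf_interpolation_one_step_second_moment_general
    {Ω : Type*} [MeasurableSpace Ω] (μ : Measure Ω) [IsProbabilityMeasure μ]
    (h s : ℝ) (hh : 0 < h) (hs0 : 0 ≤ s) (hsh : s ≤ h)
    (X ζ : Ω → ℝ)
    (hXL2 : MemLp X 2 μ)
    (hlaw : Measure.map ζ μ = gaussianReal 0 s.toNNReal)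
    (hindep : IndepFun ζ X μ)
    (Y : Ω → ℝ)
    (hY : Y = fun ω => X ω + s * (-(X ω) ^ 3 / (1 + h * (X ω) ^ 2))
        + ζ ω * ((X ω) ^ 2 / (1 + h * (X ω) ^ 2))) :
    (∫ ω, (Y ω) ^ 2 ∂μ
      = (∫ ω, (X ω) ^ 2 ∂μ) - s * ∫ ω, (X ω) ^ 4 / (1 + h * (X ω) ^ 2) ^ 2 ∂μ
        + s * (s - 2 * h) * ∫ ω, (X ω) ^ 6 / (1 + h * (X ω) ^ 2) ^ 2 ∂μ)
    ∧ (∫ ω, (Y ω) ^ 2 ∂μ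
        ≤ (∫ ω, (X ω) ^ 2 ∂μ) - s * ∫ ω, (X ω) ^ 4 / (1 + h * (X ω) ^ 2) ^ 2 ∂μ)
    ∧ (∫ ω, (Y ω) ^ 2 ∂μ ≤ ∫ ω, (X ω) ^ 2 ∂μ) := by
  have hζ : HasLaw ζ (gaussianReal 0 s.toNNReal) μ :=
    ⟨aemeasurable_of_map_neZero (by rw [hlaw]; infer_instance), hlaw⟩
  have hmean : μ[ζ] = 0 := by rw [hζ.integral_eq, integral_id_gaussianReal]
  have hvar : Var[ζ; μ] = s := by
    rw [hζ.variance_eq, variance_id_gaussianReal, Real.coe_toNNReal _ hs0]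
  have hstep := integral_sq_tamedEulerStep hh hXL2 hζ.hasGaussianLaw.memLp_two hindep hmean hvar
  simp only [tamedDrift_sq, tamedDiffusion_sq] at hstep
  have hY' : (fun ω => Y ω ^ 2)
      = fun ω => (X ω + s * tamedDrift h (X ω) + ζ ω * tamedDiffusion h (X ω)) ^ 2 := by
    subst hY; rfl
  rw [hY', hstep]
  have h4 : 0 ≤ ∫ ω, X ω ^ 4 / (1 + h * X ω ^ 2) ^ 2 ∂μ := integral_nonneg fun ω => by positivity
  have h6 : 0 ≤ ∫ ω, X ω ^ 6 / (1 + h * X ω ^ 2) ^ 2 ∂μ := integral_nonneg fun ω => by positivity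
  have hdrift : s * (s - 2 * h) * ∫ ω, X ω ^ 6 / (1 + h * X ω ^ 2) ^ 2 ∂μ ≤ 0 :=
    mul_nonpos_of_nonpos_of_nonneg (mul_nonpos_of_nonneg_of_nonpos hs0 (by linarith)) h6
  exact ⟨rfl, by linarith, by linarith [mul_nonneg hs0 h4]⟩

/-- One-step second-moment computation for the continuous-time interpolation of the tamed
Euler–Maruyama scheme: for `Y = X + s·f_h(X) + ζ·σ_h(X)` with `f_h(x) = -x³/(1+hx²)`,
`σ_h(x) = x²/(1+hx²)`, `ζ ~ N(0,s)` independent of `X`, and `0 ≤ s ≤ h`,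
`E[Y²] = E[X²] - s·E[X⁴/(1+hX²)²] + s(s-2h)·E[X⁶/(1+hX²)²]`; in particular
`E[Y²] ≤ E[X²] - s·E[X⁴/(1+hX²)²] ≤ E[X²]`. -/
theorem enkf_interpolation_one_step_second_moment
    {Ω : Type*} [MeasurableSpace Ω] (μ : Measure Ω) [IsProbabilityMeasure μ]
    (h s : ℝ) (hh : 0 < h) (hs0 : 0 ≤ s) (hsh : s ≤ h)
    (X ζ : Ω → ℝ) (hXm : Measurable X) (hζm : Measurable ζ)
    (hXL2 : MemLp X 2 μ)
    (hlaw : Measure.map ζ μ = gaussianReal 0 s.toNNReal)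
    (hindep : IndepFun ζ X μ)
    (Y : Ω → ℝ)
    (hY : Y = fun ω => X ω + s * (-(X ω) ^ 3 / (1 + h * (X ω) ^ 2))
        + ζ ω * ((X ω) ^ 2 / (1 + h * (X ω) ^ 2))) :
    (∫ ω, (Y ω) ^ 2 ∂μ
      = (∫ ω, (X ω) ^ 2 ∂μ) - s * ∫ ω, (X ω) ^ 4 / (1 + h * (X ω) ^ 2) ^ 2 ∂μ
        + s * (s - 2 * h) * ∫ ω, (X ω) ^ 6 / (1 + h * (X ω) ^ 2) ^ 2 ∂μ)
    ∧ (∫ ω, (Y ω) ^ 2 ∂μ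
        ≤ (∫ ω, (X ω) ^ 2 ∂μ) - s * ∫ ω, (X ω) ^ 4 / (1 + h * (X ω) ^ 2) ^ 2 ∂μ)
    ∧ (∫ ω, (Y ω) ^ 2 ∂μ ≤ ∫ ω, (X ω) ^ 2 ∂μ) :=
  enkf_interpolation_one_step_second_moment_general μ h s hh hs0 hsh X ζ hXL2 hlaw hindep Y hY
end
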